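/- arXiv:2211.02245 — 2 statements merged into one kernel-verified Lean document; each statement's English description precedes it below -/
import Mathlib

section
/- If two words w1 and w2 are equal in spaCy and |w1| ≤ 8, then w1 = w2 as strings. -/
/-- A character: uppercase letter, lowercase letter, digit, or special symbol. -/
inductive Ch
  | up (n : ℕ)
  | lo (n : ℕ)
  | dig (n : Fin 10)
  | sp (n : ℕ)
  deriving DecidableEq

/-- Case folding: maps uppercase letters to lowercase ones, identity otherwise. -/
def Ch.lower : Ch → Ch
  | .up n => .lo n
  | c => c

/-- Shape characters. -/
inductive Sh
  | X | x | d | spec (n : ℕ)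
  deriving DecidableEq

/-- Character class of a character. -/
def Ch.shapeChar : Ch → Sh
  | .up _ => .X
  | .lo _ => .x
  | .dig _ => .d
  | .sp n => .spec n

/-- A word is a finite string of characters. -/
abbrev Word := List Ch

/-- The norm of a word: its lowercase form. -/
def Word.norm (w : Word) : Word := w.map Ch.lower

/-- The prefix of a word: its first character. -/
def Word.pre (w : Word) : Word := w.take 1

/-- The suffix of a word: its last 3 characters. -/
def Word.suf (w : Word) : Word := w.drop (w.length - 3)

/-- Truncate maximal runs of identical shape characters to length at most 4;
`prev` is the current run's character and `k` its number of occurrences so far. -/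
def truncAux : Sh → ℕ → List Sh → List Sh
  | _, _, [] => []
  | prev, k, a :: rest =>
    if a = prev then
      (if k < 4 then [a] else []) ++ truncAux a (k + 1) rest
    else
      a :: truncAux a 1 rest

/-- The shape of a word: its character-class string with every maximal run of
identical shape characters truncated to length at most 4. -/
def Word.shape (w : Word) : List Sh :=
  match w.map Ch.shapeChar with
  | [] => []
  | a :: rest => a :: truncAux a 1 rest

/-- Two words are equal in spaCy iff they have the same prefix, suffix, norm and shape. -/
def spacyEq (w1 w2 : Word) : Prop :=
  w1.pre = w2.pre ∧ w1.suf = w2.suf ∧ w1.norm = w2.norm ∧ w1.shape = w2.shape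

lemma truncAux_length_le : ∀ (l : List Sh) (p : Sh) (k : ℕ),
    (truncAux p k l).length ≤ l.length := by
  intro l
  induction l with
  | nil => intro p k; simp [truncAux]
  | cons a rest ih =>
    intro p k
    simp only [truncAux]
    by_cases ha : a = p
    · simp only [ha, if_pos rfl]
      by_cases hk : k < 4
      · simpa [hk] using Nat.succ_le_succ (ih p (k+1))
      · simp only [if_neg hk, List.nil_append, List.length_cons]
        exact (ih p (k+1)).trans (Nat.le_succ _)
    · simpa [ha] using Nat.succ_le_succ (ih a 1)

lemma truncAux_id : ∀ (l : List Sh) (p : Sh) (k : ℕ), k + l.length ≤ 4 →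
    truncAux p k l = l := by
  intro l
  induction l with
  | nil => intro p k _; simp [truncAux]
  | cons a rest ih =>
    intro p k hk
    simp only [List.length_cons] at hk
    have hk4 : k < 4 := by omega
    have h' : (k + 1) + rest.length ≤ 4 := by omega
    have h1 : (1 : ℕ) + rest.length ≤ 4 := by omega
    simp only [truncAux]
    by_cases ha : a = p
    · simp [ha, hk4, ih _ _ h']
    · simp [ha, ih _ _ h1]

lemma truncAux_inj : ∀ (l1 l2 : List Sh) (p : Sh) (k : ℕ),
    l1.length = l2.length → k + l1.length ≤ 8 →
    truncAux p k l1 = truncAux p k l2 → l1 = l2 := by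
  intro l1
  induction l1 with
  | nil =>
    intro l2 p k hlen _ _
    exact (List.length_eq_zero_iff.mp hlen.symm).symm
  | cons a r1 ih =>
    intro l2 p k hlen hbud heq
    cases l2 with
    | nil => simp at hlen
    | cons b r2 =>
      simp only [List.length_cons, Nat.succ.injEq] at hlen
      simp only [truncAux] at heq
      by_cases ha : a = p <;> by_cases hb : b = p
      · rw [if_pos ha, if_pos hb] at heq
        have hab : a = b := ha.trans hb.symm
        rw [← hab] at heq
        by_cases hk : k < 4
        · simp only [if_pos hk, List.singleton_append, List.cons.injEq, true_and] at heq
          rw [hab, ih r2 a (k+1) hlen (by simp only [List.length_cons] at hbud; omega)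
            (hab ▸ heq)]
        · simp only [if_neg hk, List.nil_append] at heq
          rw [hab, ih r2 a (k+1) hlen (by simp only [List.length_cons] at hbud; omega)
            (hab ▸ heq)]
      · rw [if_pos ha, if_neg hb] at heq
        by_cases hk : k < 4
        · simp only [if_pos hk, List.singleton_append, List.cons.injEq] at heq
          exact absurd (heq.1.symm.trans ha) hb
        · exfalso
          simp only [if_neg hk, List.nil_append] at heq
          have h4 : 4 ≤ k := Nat.le_of_not_lt hk
          have hr2 : (1 : ℕ) + r2.length ≤ 4 := by
            simp only [List.length_cons] at hbud; omega
          have hlhs := truncAux_length_le r1 a (k+1)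
          rw [heq, truncAux_id r2 b 1 hr2] at hlhs
          simp only [List.length_cons] at hlhs
          omega
      · rw [if_neg ha, if_pos hb] at heq
        by_cases hk : k < 4
        · simp only [if_pos hk, List.singleton_append, List.cons.injEq] at heq
          exact absurd (heq.1.trans hb) ha
        · exfalso
          simp only [if_neg hk, List.nil_append] at heq
          have h4 : 4 ≤ k := Nat.le_of_not_lt hk
          have hr1 : (1 : ℕ) + r1.length ≤ 4 := by
            simp only [List.length_cons] at hbud; omega
          have hlhs := truncAux_length_le r2 b (k+1)
          rw [← heq, truncAux_id r1 a 1 hr1] at hlhs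
          simp only [List.length_cons] at hlhs
          omega
      · simp only [if_neg ha, if_neg hb, List.cons.injEq] at heq
        obtain ⟨hab, htail⟩ := heq
        subst hab
        have := ih r2 a 1 hlen (by simp only [List.length_cons] at hbud; omega) htail
        rw [this]

lemma ch_eq_of (c1 c2 : Ch) (hl : c1.lower = c2.lower)
    (hs : c1.shapeChar = c2.shapeChar) : c1 = c2 := by
  cases c1 <;> cases c2 <;> simp_all [Ch.lower, Ch.shapeChar]

theorem spacyEq_short_eq (w1 w2 : Word) (h : spacyEq w1 w2) (hlen : w1.length ≤ 8) :
    w1 = w2 := by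
  obtain ⟨-, -, hnorm, hshape⟩ := h
  have hlen12 : w1.length = w2.length := by
    have := congrArg List.length hnorm
    simpa [Word.norm] using this
  -- shapes determine shapeChar maps
  have hsc : w1.map Ch.shapeChar = w2.map Ch.shapeChar := by
    cases w1 with
    | nil =>
      cases w2 with
      | nil => rfl
      | cons d s => simp at hlen12
    | cons c t =>
      cases w2 with
      | nil => simp at hlen12
      | cons d s =>
        simp only [Word.shape, List.map_cons, List.cons.injEq] at hshape
        obtain ⟨hab, htail⟩ := hshape
        have hr1len : (t.map Ch.shapeChar).length = (s.map Ch.shapeChar).length := by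
          simp only [List.length_cons] at hlen12
          simpa using hlen12
        have hbud : 1 + (t.map Ch.shapeChar).length ≤ 8 := by
          simp only [List.length_cons] at hlen
          simp only [List.length_map]
          omega
        rw [List.map_cons, List.map_cons, hab,
          truncAux_inj _ _ _ 1 hr1len hbud (hab ▸ htail)]
  -- pointwise
  unfold Word.norm at hnorm
  clear hshape hlen hlen12
  induction w1 generalizing w2 with
  | nil =>
    cases w2 with
    | nil => rfl
    | cons b t => simp at hnorm
  | cons a t ih =>
    cases w2 with
    | nil => simp at hnorm
    | cons b s =>
      simp only [List.map_cons, List.cons.injEq] at hnorm hsc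
      rw [ch_eq_of a b hnorm.1 hsc.1, ih s hnorm.2 hsc.2]
end

section
/- If two words w1 and w2 are equal in spaCy, w1 ≠ w2, and j is a position where they differ with all earlier positions ≥ 5 agreeing, then in both words the character class is a letter at position j and positions j−4 through j−1 of w1 all have the same character class as position j of one of the words; i.e., a differing position can only be 'hidden' by shape truncation inside a run of length greater than 4 of a single letter-case class. -/
/-- A character is a letter. -/
def Ch.IsLetter : Ch → Prop
  | .up _ => True
  | .lo _ => True
  | _ => False

/-!
Since the norms agree, the characters at `j` are the two cases of one letter, so their classes
differ, while the class strings agree before `j`: from position 4 on by hypothesis, and below 4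
because truncation never cuts a run before it has four letters. Two class strings with a common
history `u` but different next classes can only have the same truncation if one of the next
classes is dropped, i.e. continues a run of length at least 4 at the end of `u`.
-/

lemma Ch.isLetter_of_lower_eq_of_ne {c d : Ch} (h : c.lower = d.lower) (hne : c ≠ d) :
    c.IsLetter ∧ d.IsLetter := by
  cases c <;> cases d <;> simp_all [Ch.lower, Ch.IsLetter]

lemma Ch.shapeChar_ne_of_lower_eq_of_ne {c d : Ch} (h : c.lower = d.lower) (hne : c ≠ d) :
    c.shapeChar ≠ d.shapeChar := by
  cases c <;> cases d <;> simp_all [Ch.lower, Ch.shapeChar]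

lemma Word.lower_getElem_eq_of_norm_eq {w1 w2 : Word} (h : w1.norm = w2.norm) {j : ℕ}
    (h1 : j < w1.length) (h2 : j < w2.length) : (w1[j]).lower = (w2[j]).lower := by
  simpa [Word.norm, h1, h2] using congrArg (·[j]?) h

lemma Word.shape_eq_truncAux (w : Word) (p : Sh) :
    w.shape = truncAux p 0 (w.map Ch.shapeChar) := by
  rcases hw : w.map Ch.shapeChar with _ | ⟨a, rest⟩
  · simp [Word.shape, hw, truncAux]
  · by_cases hap : a = p <;> simp [Word.shape, hw, truncAux, hap]

lemma truncAux_take {p : Sh} {k n : ℕ} (l : List Sh) (h : n + k ≤ 4) :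
    (truncAux p k l).take n = l.take n := by
  induction l generalizing p k n with
  | nil => simp [truncAux]
  | cons a l ih =>
    cases n with
    | zero => simp
    | succ m =>
      by_cases hap : a = p
      · simp [truncAux, hap, show k < 4 by omega, ih (show m + (k + 1) ≤ 4 by omega)]
      · simp [truncAux, hap, ih (show m + 1 ≤ 4 by omega)]

lemma truncAux_cons_cancel {p s : Sh} {k : ℕ} {l1 l2 : List Sh}
    (h : truncAux p k (s :: l1) = truncAux p k (s :: l2)) :
    truncAux s (if s = p then k + 1 else 1) l1 = truncAux s (if s = p then k + 1 else 1) l2 := by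
  unfold truncAux at h
  split_ifs at h ⊢ <;> simpa using h

lemma truncAux_append_cons_of_ne {a b : Sh} {r1 r2 : List Sh} (hab : a ≠ b) (u : List Sh)
    {p : Sh} {k : ℕ} (h : truncAux p k (u ++ a :: r1) = truncAux p k (u ++ b :: r2)) :
    ∃ c, (c = a ∨ c = b) ∧ List.replicate 4 c <:+ List.replicate k p ++ u := by
  induction u generalizing p k with
  | nil =>
    have hk : 4 ≤ k := by
      by_contra hk
      by_cases hap : a = p <;> by_cases hbp : b = p <;>
        simp_all [truncAux, show k < 4 by omega]
    have hp : a = p ∨ b = p := by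
      by_contra! hp
      simp_all [truncAux]
    refine ⟨p, hp.imp Eq.symm Eq.symm, ?_⟩
    obtain ⟨m, rfl⟩ := Nat.exists_eq_add_of_le' hk
    simp [List.replicate_add]
  | cons s u ih =>
    obtain ⟨c, hc, hs⟩ := ih (truncAux_cons_cancel h)
    refine ⟨c, hc, ?_⟩
    split_ifs at hs with hsp
    · subst hsp
      simpa [List.replicate_succ'] using hs
    · exact hs.trans (List.suffix_append _ _)

lemma List.getElem_eq_of_replicate_suffix {α : Type*} {n : ℕ} {c : α} {l : List α}
    (hs : List.replicate n c <:+ l) {k : ℕ} (hk : l.length - n ≤ k) (hkl : k < l.length) :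
    l[k] = c := by
  obtain ⟨t, rfl⟩ := hs
  simp only [List.length_append, List.length_replicate] at hk
  rw [List.getElem_append_right (by omega), List.getElem_replicate]

lemma exists_replicate_suffix_of_truncAux_eq {p : Sh} {l1 l2 : List Sh} {j : ℕ}
    (h : truncAux p 0 l1 = truncAux p 0 l2) (hpre : l1.take j = l2.take j)
    (h1 : j < l1.length) (h2 : j < l2.length) (hne : l1[j] ≠ l2[j]) :
    ∃ c, (c = l1[j] ∨ c = l2[j]) ∧ List.replicate 4 c <:+ l1.take j := by
  have hsplit (l : List Sh) (hl : j < l.length) : l = l.take j ++ l[j] :: l.drop (j + 1) := by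
    rw [← List.drop_eq_getElem_cons, List.take_append_drop]
  rw [hsplit l1 h1, hsplit l2 h2, ← hpre] at h
  simpa using truncAux_append_cons_of_ne hne _ h

lemma Word.take_four_map_shapeChar_eq_of_shape_eq {w1 w2 : Word} (h : w1.shape = w2.shape) :
    (w1.map Ch.shapeChar).take 4 = (w2.map Ch.shapeChar).take 4 := by
  rw [← truncAux_take (p := .X) (k := 0) _ le_rfl, ← Word.shape_eq_truncAux, h,
    Word.shape_eq_truncAux _ .X, truncAux_take _ le_rfl]

theorem spacyEq_diff_hidden_in_long_run (w1 w2 : Word) (h : spacyEq w1 w2)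
    (j : ℕ) (h1 : j < w1.length) (h2 : j < w2.length)
    (hdiff : w1[j]'h1 ≠ w2[j]'h2)
    (hprev : ∀ (k : ℕ), 4 ≤ k → ∀ (hk : k < j), w1[k]'(by omega) = w2[k]'(by omega)) :
    (Ch.IsLetter (w1[j]'h1) ∧ Ch.IsLetter (w2[j]'h2)) ∧
    (∀ (k : ℕ), j - 4 ≤ k → ∀ (hk : k < j),
      Ch.shapeChar (w1[k]'(by omega)) = Ch.shapeChar (w1[j]'h1) ∨
      Ch.shapeChar (w1[k]'(by omega)) = Ch.shapeChar (w2[j]'h2)) := by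
  obtain ⟨-, -, hnorm, hshape⟩ := h
  have hlower := Word.lower_getElem_eq_of_norm_eq hnorm h1 h2
  refine ⟨Ch.isLetter_of_lower_eq_of_ne hlower hdiff, ?_⟩
  have hfour := Word.take_four_map_shapeChar_eq_of_shape_eq hshape
  set s1 := w1.map Ch.shapeChar
  set s2 := w2.map Ch.shapeChar
  have hpre : s1.take j = s2.take j := by
    refine List.ext_getElem? fun i => ?_
    rw [List.getElem?_take, List.getElem?_take]
    split_ifs with hij
    · by_cases hi : i < 4
      · simpa [List.getElem?_take, hi] using congrArg (·[i]?) hfour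
      · simp [s1, s2, h1.trans' hij, h2.trans' hij, hprev i (by omega) hij]
    · rfl
  obtain ⟨c, hc, hrun⟩ := exists_replicate_suffix_of_truncAux_eq
    (by rwa [Word.shape_eq_truncAux _ .X, Word.shape_eq_truncAux _ .X] at hshape) hpre
    (by simpa [s1] using h1) (by simpa [s2] using h2)
    (by simpa [s1, s2] using Ch.shapeChar_ne_of_lower_eq_of_ne hlower hdiff)
  intro k hk hkj
  have hkc := List.getElem_eq_of_replicate_suffix hrun (k := k)
    (by simp [s1]; omega) (by simp [s1]; omega)
  simp only [s1, s2, List.getElem_take, List.getElem_map] at hkc hc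
  rcases hc with rfl | rfl
  exacts [Or.inl hkc, Or.inr hkc]
end
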